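/- arXiv:1605.09772 — 3 statements merged into one kernel-verified Lean document; each statement's English description precedes it below -/
import Mathlib

section
/- Let E = (S, A_E, →_E, s₀) and M = (T, A_M, →_M, t₀) be LTSs. For every finite trace ℓ₀,…,ℓ_{n−1} of the parallel composition E‖M, each label ℓ_i is relaxed-enabled from q_i with some outcome, where (q_k) is the abstraction sequence of the abstracting composition of E and M (i.e., every trace of E‖M is a path contained in the abstracting composition). -/
/-- A Labeled Transition System over state type `σ` and label type `Λ`:
an alphabet (set of labels), a transition relation contained in
`S × A × S`, and an initial state. -/
structure LTS (σ Λ : Type*) where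
  alphabet : Set Λ
  trans : σ → Λ → σ → Prop
  init : σ
  trans_mem : ∀ {s a s'}, trans s a s' → a ∈ alphabet

variable {S T Λ : Type*}

/-- Transition relation of the parallel composition `E ‖ M`. -/
def ParTrans (E : LTS S Λ) (M : LTS T Λ) (p : S × T) (a : Λ) (p' : S × T) : Prop :=
  (a ∈ E.alphabet \ M.alphabet ∧ E.trans p.1 a p'.1 ∧ p'.2 = p.2) ∨
  (a ∈ M.alphabet \ E.alphabet ∧ M.trans p.2 a p'.2 ∧ p'.1 = p.1) ∨
  (a ∈ E.alphabet ∩ M.alphabet ∧ E.trans p.1 a p'.1 ∧ M.trans p.2 a p'.2)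

/-- Label `a` is relaxed-enabled from `q ⊆ S ⊎ T` with outcome `x'`. -/
def RelaxedEnabled (E : LTS S Λ) (M : LTS T Λ) (q : Set (S ⊕ T)) (a : Λ)
    (x' : S ⊕ T) : Prop :=
  (a ∈ E.alphabet \ M.alphabet ∧
    ∃ s s', Sum.inl s ∈ q ∧ E.trans s a s' ∧ x' = Sum.inl s') ∨
  (a ∈ M.alphabet \ E.alphabet ∧
    ∃ t t', Sum.inr t ∈ q ∧ M.trans t a t' ∧ x' = Sum.inr t') ∨
  (a ∈ E.alphabet ∩ M.alphabet ∧
    ∃ s s' t t', Sum.inl s ∈ q ∧ Sum.inr t ∈ q ∧ E.trans s a s' ∧ M.trans t a t' ∧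
      (x' = Sum.inl s' ∨ x' = Sum.inr t'))

/-- The abstracting-composition step function `F`. -/
def Fstep (E : LTS S Λ) (M : LTS T Λ) (q : Set (S ⊕ T)) : Set (S ⊕ T) :=
  q ∪ {x' | ∃ a, RelaxedEnabled E M q a x'}

/-- The abstraction sequence `q_k = F^[k] {inl s₀, inr t₀}`. -/
def absSeq (E : LTS S Λ) (M : LTS T Λ) (k : ℕ) : Set (S ⊕ T) :=
  (Fstep E M)^[k] {Sum.inl E.init, Sum.inr M.init}

/-- `ℓ 0, …, ℓ (n-1)` is a finite trace of length `n` of `E ‖ M`. -/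
def IsTrace (E : LTS S Λ) (M : LTS T Λ) (n : ℕ) (ℓ : ℕ → Λ) : Prop :=
  ∃ r : ℕ → S × T, r 0 = (E.init, M.init) ∧
    ∀ i < n, ParTrans E M (r i) (ℓ i) (r (i + 1))

/-- `ℓ 0, …, ℓ (n-1)` with witness states `x 0, …, x n` is an
abstracting path of length `n` of the abstracting composition of `E` and `M`,
where `τ` is the special delay label. -/
def IsAbsPath (E : LTS S Λ) (M : LTS T Λ) (τ : Λ) (n : ℕ) (ℓ : ℕ → Λ)
    (x : ℕ → S ⊕ T) : Prop :=
  (∀ i < n, ℓ i ∈ E.alphabet ∪ M.alphabet ∪ {τ}) ∧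
  (∀ i ≤ n, x i ∈ absSeq E M i) ∧
  (∀ i < n,
    (ℓ i = τ ∧ x (i + 1) = x i) ∨
    ((∃ y, RelaxedEnabled E M (absSeq E M i) (ℓ i) y) ∧
      ∃ u v u' v', ParTrans E M (u, v) (ℓ i) (u', v') ∧
        (x i = Sum.inl u ∨ x i = Sum.inr v) ∧
        (x (i + 1) = Sum.inl u' ∨ x (i + 1) = Sum.inr v')))

/-- `p` is reachable from the initial state of `E ‖ M` by a path of length at most `k`. -/
def ReachableWithin (E : LTS S Λ) (M : LTS T Λ) (k : ℕ) (p : S × T) : Prop :=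
  ∃ m ≤ k, ∃ r : ℕ → S × T, ∃ ℓ : ℕ → Λ,
    r 0 = (E.init, M.init) ∧ r m = p ∧
    ∀ i < m, ParTrans E M (r i) (ℓ i) (r (i + 1))

lemma absSeq_mono (E : LTS S Λ) (M : LTS T Λ) (k : ℕ) :
    absSeq E M k ⊆ absSeq E M (k + 1) := by
  rw [absSeq, absSeq, Function.iterate_succ_apply']
  exact Set.subset_union_left

/-- Every trace of `E ‖ M` is a path contained in the abstracting composition:
each label `ℓ i` is relaxed-enabled from `q i` with some outcome. -/
theorem trace_containedPath (E : LTS S Λ) (M : LTS T Λ) (n : ℕ) (ℓ : ℕ → Λ)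
    (h : IsTrace E M n ℓ) :
    ∀ i < n, ∃ x', RelaxedEnabled E M (absSeq E M i) (ℓ i) x' := by
  obtain ⟨r, hr0, hstep⟩ := h
  have key : ∀ i, i ≤ n →
      Sum.inl (r i).1 ∈ absSeq E M i ∧ Sum.inr (r i).2 ∈ absSeq E M i := by
    intro i
    induction i with
    | zero =>
      intro _
      rw [hr0]
      exact ⟨Or.inl rfl, Or.inr rfl⟩
    | succ i ih =>
      intro hin
      have hi : i < n := Nat.lt_of_succ_le hin
      obtain ⟨hl, hrr⟩ := ih (le_of_lt hi)
      have hstep' := hstep i hi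
      have hsub := absSeq_mono E M i
      have hF : ∀ y, (∃ a, RelaxedEnabled E M (absSeq E M i) a y) →
          y ∈ absSeq E M (i + 1) := by
        intro y hy
        rw [absSeq, Function.iterate_succ_apply']
        exact Or.inr hy
      rcases hstep' with ⟨ha, ht, he⟩ | ⟨ha, ht, he⟩ | ⟨ha, ht1, ht2⟩
      · constructor
        · exact hF _ ⟨ℓ i, Or.inl ⟨ha, _, _, hl, ht, rfl⟩⟩
        · rw [he]; exact hsub hrr
      · constructor
        · rw [he]; exact hsub hl
        · exact hF _ ⟨ℓ i, Or.inr (Or.inl ⟨ha, _, _, hrr, ht, rfl⟩)⟩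
      · constructor
        · exact hF _ ⟨ℓ i, Or.inr (Or.inr ⟨ha, _, _, _, _, hl, hrr, ht1, ht2, Or.inl rfl⟩)⟩
        · exact hF _ ⟨ℓ i, Or.inr (Or.inr ⟨ha, _, _, _, _, hl, hrr, ht1, ht2, Or.inr rfl⟩)⟩
  intro i hi
  obtain ⟨hl, hrr⟩ := key i (le_of_lt hi)
  rcases hstep i hi with ⟨ha, ht, _⟩ | ⟨ha, ht, _⟩ | ⟨ha, ht1, ht2⟩
  · exact ⟨_, Or.inl ⟨ha, _, _, hl, ht, rfl⟩⟩
  · exact ⟨_, Or.inr (Or.inl ⟨ha, _, _, hrr, ht, rfl⟩)⟩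
  · exact ⟨_, Or.inr (Or.inr ⟨ha, _, _, _, _, hl, hrr, ht1, ht2, Or.inl rfl⟩)⟩
end

section
/- (Admissibility) Let E = (S, A_E, →_E, s₀) and M = (T, A_M, →_M, t₀) be LTSs and let G_C ⊆ Λ be a set of labels (a co-safety goal). If there exists a finite trace of the parallel composition E‖M of length n whose last label belongs to G_C, then there exists an abstracting path of the abstracting composition of E and M of length at most n whose last label belongs to G_C. In particular, the minimum length of an abstracting path reaching G_C is at most the minimum length of a trace of E‖M reaching G_C: the abstraction-based estimate never overestimates the distance to the goal. -/
variable {S T Λ : Type*}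

lemma step_mem {E : LTS S Λ} {M : LTS T Λ} {q : Set (S ⊕ T)} {s : S} {t : T}
    {a : Λ} {s' : S} {t' : T} (hs : Sum.inl s ∈ q) (ht : Sum.inr t ∈ q)
    (hp : ParTrans E M (s, t) a (s', t')) :
    Sum.inl s' ∈ Fstep E M q ∧ Sum.inr t' ∈ Fstep E M q ∧
      ∃ y, RelaxedEnabled E M q a y := by
  rcases hp with ⟨ha, he, h2⟩ | ⟨ha, hm, h1⟩ | ⟨ha, he, hm⟩
  · simp only at he h2
    refine ⟨Or.inr ⟨a, Or.inl ⟨ha, s, s', hs, he, rfl⟩⟩, ?_,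
      ⟨Sum.inl s', Or.inl ⟨ha, s, s', hs, he, rfl⟩⟩⟩
    subst h2; exact Or.inl ht
  · simp only at hm h1
    refine ⟨?_, Or.inr ⟨a, Or.inr (Or.inl ⟨ha, t, t', ht, hm, rfl⟩)⟩,
      ⟨Sum.inr t', Or.inr (Or.inl ⟨ha, t, t', ht, hm, rfl⟩)⟩⟩
    subst h1; exact Or.inl hs
  · simp only at he hm
    exact ⟨Or.inr ⟨a, Or.inr (Or.inr ⟨ha, s, s', t, t', hs, ht, he, hm, Or.inl rfl⟩)⟩,
      Or.inr ⟨a, Or.inr (Or.inr ⟨ha, s, s', t, t', hs, ht, he, hm, Or.inr rfl⟩)⟩,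
      ⟨Sum.inl s', Or.inr (Or.inr ⟨ha, s, s', t, t', hs, ht, he, hm, Or.inl rfl⟩)⟩⟩

/-- Admissibility: if some trace of `E ‖ M` of length `n` ends with a label
in the co-safety goal `G_C`, then some abstracting path of length at most `n`
ends with a label in `G_C`; so the abstraction-based estimate never
overestimates the distance to the goal. -/
theorem absPath_admissible (E : LTS S Λ) (M : LTS T Λ) (τ : Λ)
    (hτ : τ ∉ E.alphabet ∪ M.alphabet) (G_C : Set Λ) (n : ℕ) (hn : 0 < n)
    (ℓ : ℕ → Λ) (htrace : IsTrace E M n ℓ) (hgoal : ℓ (n - 1) ∈ G_C) :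
    ∃ m, 0 < m ∧ m ≤ n ∧ ∃ ℓ' : ℕ → Λ, ∃ x : ℕ → S ⊕ T,
      IsAbsPath E M τ m ℓ' x ∧ ℓ' (m - 1) ∈ G_C := by
  obtain ⟨r, hr0, hrstep⟩ := htrace
  -- both components of r i are in absSeq i, for i ≤ n
  have key : ∀ i ≤ n, Sum.inl (r i).1 ∈ absSeq E M i ∧ Sum.inr (r i).2 ∈ absSeq E M i := by
    intro i hi
    induction i with
    | zero => rw [hr0]; exact ⟨Or.inl rfl, Or.inr rfl⟩
    | succ k ih =>
      have hk : k ≤ n := Nat.le_of_succ_le hi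
      obtain ⟨h1, h2⟩ := ih hk
      have hpar := hrstep k (Nat.lt_of_succ_le hi)
      have : ParTrans E M ((r k).1, (r k).2) (ℓ k) ((r (k+1)).1, (r (k+1)).2) := by
        simpa using hpar
      obtain ⟨a1, a2, _⟩ := step_mem h1 h2 this
      constructor <;> · rw [absSeq, Function.iterate_succ_apply']; assumption
  refine ⟨n, hn, le_refl n, ℓ, fun i => Sum.inl (r i).1, ⟨?_, ?_, ?_⟩, hgoal⟩
  · intro i hi
    have hpar := hrstep i hi
    rcases hpar with ⟨ha, _⟩ | ⟨ha, _⟩ | ⟨ha, _⟩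
    · exact Or.inl (Or.inl ha.1)
    · exact Or.inl (Or.inr ha.1)
    · exact Or.inl (Or.inl ha.1)
  · intro i hi; exact (key i hi).1
  · intro i hi
    have hpar := hrstep i hi
    have hpar' : ParTrans E M ((r i).1, (r i).2) (ℓ i) ((r (i+1)).1, (r (i+1)).2) := by
      simpa using hpar
    obtain ⟨h1, h2⟩ := key i (le_of_lt hi)
    obtain ⟨_, _, hy⟩ := step_mem h1 h2 hpar'
    exact Or.inr ⟨hy, (r i).1, (r i).2, (r (i+1)).1, (r (i+1)).2, hpar',
      Or.inl rfl, Or.inl rfl⟩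
end

section
/- Let E = (S, A_E, →_E, s₀) and M = (T, A_M, →_M, t₀) be LTSs and let G_C ⊆ Λ be a set of labels (a co-safety goal). If no abstracting path of the abstracting composition of E and M contains a label belonging to G_C, then no finite trace of the parallel composition E‖M contains a label belonging to G_C (so the co-safety goal G_C is unreachable in E‖M). -/
variable {S T Λ : Type*}

lemma absSeq_succ (E : LTS S Λ) (M : LTS T Λ) (k : ℕ) :
    absSeq E M (k + 1) = Fstep E M (absSeq E M k) :=
  Function.iterate_succ_apply' _ _ _

lemma subset_Fstep (E : LTS S Λ) (M : LTS T Λ) (q : Set (S ⊕ T)) :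
    q ⊆ Fstep E M q := Set.subset_union_left

lemma trace_mem_absSeq (E : LTS S Λ) (M : LTS T Λ) (n : ℕ) (ℓ : ℕ → Λ)
    (r : ℕ → S × T) (h0 : r 0 = (E.init, M.init))
    (hstep : ∀ i < n, ParTrans E M (r i) (ℓ i) (r (i + 1))) :
    ∀ i ≤ n, Sum.inl (r i).1 ∈ absSeq E M i ∧ Sum.inr (r i).2 ∈ absSeq E M i := by
  intro i
  induction i with
  | zero =>
    intro _
    simp [absSeq, h0]
  | succ k ih =>
    intro hk
    have hkn : k ≤ n := Nat.le_of_succ_le hk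
    obtain ⟨hl, hr⟩ := ih hkn
    have ht := hstep k (Nat.lt_of_succ_le hk)
    rw [absSeq_succ]
    rcases ht with ⟨ha, he, heq⟩ | ⟨ha, hm, heq⟩ | ⟨ha, he, hm⟩
    · constructor
      · exact Or.inr ⟨ℓ k, Or.inl ⟨ha, _, _, hl, he, rfl⟩⟩
      · rw [heq]; exact subset_Fstep E M _ hr
    · constructor
      · rw [heq]; exact subset_Fstep E M _ hl
      · exact Or.inr ⟨ℓ k, Or.inr (Or.inl ⟨ha, _, _, hr, hm, rfl⟩)⟩
    · constructor
      · exact Or.inr ⟨ℓ k, Or.inr (Or.inr ⟨ha, _, _, _, _, hl, hr, he, hm, Or.inl rfl⟩)⟩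
      · exact Or.inr ⟨ℓ k, Or.inr (Or.inr ⟨ha, _, _, _, _, hl, hr, he, hm, Or.inr rfl⟩)⟩

/-- If no abstracting path of the abstracting composition of `E` and `M`
contains a label of `G_C`, then no finite trace of `E ‖ M` contains a label
of `G_C`: the co-safety goal is unreachable in `E ‖ M`. -/
theorem goal_unreachable_of_no_absPath (E : LTS S Λ) (M : LTS T Λ) (τ : Λ)
    (hτ : τ ∉ E.alphabet ∪ M.alphabet) (G_C : Set Λ)
    (h : ∀ (n : ℕ) (ℓ : ℕ → Λ) (x : ℕ → S ⊕ T),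
      IsAbsPath E M τ n ℓ x → ∀ i < n, ℓ i ∉ G_C) :
    ∀ (n : ℕ) (ℓ : ℕ → Λ), IsTrace E M n ℓ → ∀ i < n, ℓ i ∉ G_C := by
  intro n ℓ ⟨r, h0, hstep⟩ i hin hG
  have hmem := trace_mem_absSeq E M n ℓ r h0 hstep
  refine h n ℓ (fun j => Sum.inl (r j).1) ⟨?_, ?_, ?_⟩ i hin hG
  · intro j hj
    rcases hstep j hj with ⟨ha, _⟩ | ⟨ha, _⟩ | ⟨ha, _⟩
    · exact Or.inl (Or.inl ha.1)
    · exact Or.inl (Or.inr ha.1)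
    · exact Or.inl (Or.inl ha.1)
  · intro j hj
    exact (hmem j (le_trans hj (le_refl n))).1
  · intro j hj
    have hjn : j ≤ n := le_of_lt hj
    obtain ⟨hl, hr⟩ := hmem j hjn
    have ht := hstep j hj
    refine Or.inr ⟨?_, (r j).1, (r j).2, (r (j+1)).1, (r (j+1)).2, ?_, Or.inl rfl, Or.inl rfl⟩
    · rcases ht with ⟨ha, he, _⟩ | ⟨ha, hm, _⟩ | ⟨ha, he, hm⟩
      · exact ⟨_, Or.inl ⟨ha, _, _, hl, he, rfl⟩⟩
      · exact ⟨_, Or.inr (Or.inl ⟨ha, _, _, hr, hm, rfl⟩)⟩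
      · exact ⟨_, Or.inr (Or.inr ⟨ha, _, _, _, _, hl, hr, he, hm, Or.inl rfl⟩)⟩
    · simpa using ht
end
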